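/- arXiv:1207.0076 — 5 statements merged into one kernel-verified Lean document; each statement's English description precedes it below -/
import Mathlib

section
/- Let n ∈ ℕ and 1 < m < n. Every matrix x ∈ B(n,ℝ) admits a unique decomposition x = x_m · x(m) · x^{(m)}, where x_m = I + Σ_{m<k<r≤n} a_{kr} E_{kr}, x(m) = I + Σ_{1≤k≤m<r≤n} b_{kr} E_{kr}, and x^{(m)} = I + Σ_{1≤k<r≤m} c_{kr} E_{kr}. -/
open Matrix

/-- `B_m` (0-based indexing): unitriangular matrices whose off-diagonal entries vanish
outside the range `m ≤ k < r` (1-based: `m < k < r ≤ n`). -/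
def InBsub (n m : ℕ) (u : Matrix (Fin n) (Fin n) ℝ) : Prop :=
  (∀ i, u i i = 1) ∧ ∀ i j : Fin n, i ≠ j → ¬(m ≤ (i : ℕ) ∧ (i : ℕ) < (j : ℕ)) → u i j = 0

/-- `B(m)` (0-based indexing): unitriangular matrices whose off-diagonal entries vanish
outside the range `k < m ≤ r` (1-based: `1 ≤ k ≤ m < r ≤ n`). -/
def InBmid (n m : ℕ) (u : Matrix (Fin n) (Fin n) ℝ) : Prop :=
  (∀ i, u i i = 1) ∧ ∀ i j : Fin n, i ≠ j → ¬((i : ℕ) < m ∧ m ≤ (j : ℕ)) → u i j = 0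

/-- `B^{(m)}` (0-based indexing): unitriangular matrices whose off-diagonal entries vanish
outside the range `k < r < m` (1-based: `1 ≤ k < r ≤ m`). -/
def InBsup (n m : ℕ) (u : Matrix (Fin n) (Fin n) ℝ) : Prop :=
  (∀ i, u i i = 1) ∧ ∀ i j : Fin n, i ≠ j → ¬((i : ℕ) < (j : ℕ) ∧ (j : ℕ) < m) → u i j = 0

lemma myBC_apply (n m : ℕ) (B C : Matrix (Fin n) (Fin n) ℝ)
    (hB : InBmid n m B) (hC : InBsup n m C) (k j : Fin n) (hk : m ≤ (k : ℕ)) :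
    (B * C) k j = if k = j then (1 : ℝ) else 0 := by
  rw [Matrix.mul_apply, Finset.sum_eq_single k]
  · rw [hB.1, one_mul]
    by_cases h : k = j
    · subst h; rw [hC.1, if_pos rfl]
    · rw [hC.2 k j h (by rintro ⟨h1, h2⟩; omega), if_neg h]
  · intro l _ hlk
    rw [hB.2 k l (Ne.symm hlk) (by rintro ⟨h1, h2⟩; omega), zero_mul]
  · intro h; exact absurd (Finset.mem_univ k) h

lemma myBC_diag (n m : ℕ) (B C : Matrix (Fin n) (Fin n) ℝ)
    (hB : InBmid n m B) (hC : InBsup n m C) (j : Fin n) :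
    (B * C) j j = 1 := by
  rw [Matrix.mul_apply, Finset.sum_eq_single j]
  · rw [hB.1, hC.1, one_mul]
  · intro l _ hlj
    by_cases hl : (j : ℕ) < m ∧ m ≤ (l : ℕ)
    · rw [hC.2 l j hlj (by rintro ⟨h1, h2⟩; omega), mul_zero]
    · rw [hB.2 j l (Ne.symm hlj) hl, zero_mul]
  · intro h; exact absurd (Finset.mem_univ j) h

lemma my_key (n m : ℕ) (A B C : Matrix (Fin n) (Fin n) ℝ)
    (hA : InBsub n m A) (hB : InBmid n m B) (hC : InBsup n m C) (i j : Fin n) :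
    (A * B * C) i j =
      if m ≤ (i : ℕ) then A i j else if m ≤ (j : ℕ) then B i j else C i j := by
  rw [mul_assoc, Matrix.mul_apply]
  by_cases hi : m ≤ (i : ℕ)
  · rw [if_pos hi, Finset.sum_eq_single j]
    · rw [myBC_diag n m B C hB hC j, mul_one]
    · intro k _ hkj
      by_cases hk : m ≤ (k : ℕ)
      · rw [myBC_apply n m B C hB hC k j hk, if_neg hkj, mul_zero]
      · rw [hA.2 i k (by rintro rfl; omega) (by rintro ⟨h1, h2⟩; omega), zero_mul]
    · intro h; exact absurd (Finset.mem_univ j) h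
  · rw [if_neg hi, Finset.sum_eq_single i]
    · rw [hA.1, one_mul, Matrix.mul_apply]
      by_cases hj : m ≤ (j : ℕ)
      · rw [if_pos hj, Finset.sum_eq_single j]
        · rw [hC.1, mul_one]
        · intro l _ hlj
          rw [hC.2 l j hlj (by rintro ⟨h1, h2⟩; omega), mul_zero]
        · intro h; exact absurd (Finset.mem_univ j) h
      · rw [if_neg hj, Finset.sum_eq_single i]
        · rw [hB.1, one_mul]
        · intro l _ hli
          by_cases hl : m ≤ (l : ℕ)
          · rw [hC.2 l j (by rintro rfl; omega) (by rintro ⟨h1, h2⟩; omega), mul_zero]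
          · rw [hB.2 i l (Ne.symm hli) (by rintro ⟨h1, h2⟩; omega), zero_mul]
        · intro h; exact absurd (Finset.mem_univ i) h
    · intro k _ hki
      rw [hA.2 i k (Ne.symm hki) (fun h => hi h.1), zero_mul]
    · intro h; exact absurd (Finset.mem_univ i) h

lemma my_uniq (n m : ℕ) (A B C A' B' C' : Matrix (Fin n) (Fin n) ℝ)
    (hA : InBsub n m A) (hB : InBmid n m B) (hC : InBsup n m C)
    (hA' : InBsub n m A') (hB' : InBmid n m B') (hC' : InBsup n m C')
    (h : A * B * C = A' * B' * C') : A = A' ∧ B = B' ∧ C = C' := by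
  have key : ∀ i j : Fin n,
      (if m ≤ (i : ℕ) then A i j else if m ≤ (j : ℕ) then B i j else C i j) =
      (if m ≤ (i : ℕ) then A' i j else if m ≤ (j : ℕ) then B' i j else C' i j) := by
    intro i j
    rw [← my_key n m A B C hA hB hC i j, ← my_key n m A' B' C' hA' hB' hC' i j, h]
  refine ⟨?_, ?_, ?_⟩ <;> ext i j
  · by_cases hi : m ≤ (i : ℕ)
    · have := key i j; rwa [if_pos hi, if_pos hi] at this
    · by_cases hij : i = j
      · subst hij; rw [hA.1, hA'.1]
      · rw [hA.2 i j hij (fun h => hi h.1), hA'.2 i j hij (fun h => hi h.1)]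
  · by_cases hr : (i : ℕ) < m ∧ m ≤ (j : ℕ)
    · obtain ⟨hr1, hr2⟩ := hr
      simpa only [if_neg (show ¬ m ≤ (i:ℕ) by omega), if_pos hr2] using key i j
    · by_cases hij : i = j
      · subst hij; rw [hB.1, hB'.1]
      · rw [hB.2 i j hij hr, hB'.2 i j hij hr]
  · by_cases hr : (i : ℕ) < m ∧ (j : ℕ) < m
    · obtain ⟨hr1, hr2⟩ := hr
      simpa only [if_neg (show ¬ m ≤ (i:ℕ) by omega), if_neg (show ¬ m ≤ (j:ℕ) by omega)] using key i j
    · by_cases hij : i = j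
      · subst hij; rw [hC.1, hC'.1]
      · rw [hC.2 i j hij (by rintro ⟨h1, h2⟩; omega), hC'.2 i j hij (by rintro ⟨h1, h2⟩; omega)]

/-- Every unitriangular matrix `x ∈ B(n,ℝ)` decomposes uniquely as
`x = x_m ⬝ x(m) ⬝ x^{(m)}` with `x_m ∈ B_m`, `x(m) ∈ B(m)`, `x^{(m)} ∈ B^{(m)}`. -/
theorem unitriangular_triple_decomposition (n m : ℕ) (hm1 : 1 < m) (hmn : m < n)
    (x : Matrix (Fin n) (Fin n) ℝ)
    (hdiag : ∀ i, x i i = 1) (hlow : ∀ i j : Fin n, j < i → x i j = 0) :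
    ∃! t : Matrix (Fin n) (Fin n) ℝ × Matrix (Fin n) (Fin n) ℝ × Matrix (Fin n) (Fin n) ℝ,
      InBsub n m t.1 ∧ InBmid n m t.2.1 ∧ InBsup n m t.2.2 ∧ x = t.1 * t.2.1 * t.2.2 := by
  have hlow' : ∀ i j : Fin n, (j : ℕ) < (i : ℕ) → x i j = 0 := fun i j h =>
    hlow i j (Fin.lt_def.mpr h)
  set A : Matrix (Fin n) (Fin n) ℝ :=
    Matrix.of fun i j => if i = j then 1 else if m ≤ (i : ℕ) ∧ (i : ℕ) < (j : ℕ) then x i j else 0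
    with hAdef
  set B : Matrix (Fin n) (Fin n) ℝ :=
    Matrix.of fun i j => if i = j then 1 else if (i : ℕ) < m ∧ m ≤ (j : ℕ) then x i j else 0
    with hBdef
  set C : Matrix (Fin n) (Fin n) ℝ :=
    Matrix.of fun i j => if i = j then 1 else if (i : ℕ) < (j : ℕ) ∧ (j : ℕ) < m then x i j else 0
    with hCdef
  have hA : InBsub n m A := by
    constructor
    · intro i; simp [hAdef]
    · intro i j hij hc
      simp only [hAdef, Matrix.of_apply]
      rw [if_neg hij, if_neg hc]
  have hB : InBmid n m B := by
    constructor
    · intro i; simp [hBdef]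
    · intro i j hij hc
      simp only [hBdef, Matrix.of_apply]
      rw [if_neg hij, if_neg hc]
  have hC : InBsup n m C := by
    constructor
    · intro i; simp [hCdef]
    · intro i j hij hc
      simp only [hCdef, Matrix.of_apply]
      rw [if_neg hij, if_neg hc]
  have hprod : x = A * B * C := by
    ext i j
    rw [my_key n m A B C hA hB hC i j]
    by_cases hi : m ≤ (i : ℕ)
    · rw [if_pos hi]
      by_cases hij : i = j
      · subst hij; rw [hdiag]; simp [hAdef]
      · simp only [hAdef, Matrix.of_apply, if_neg hij]
        by_cases hc : m ≤ (i : ℕ) ∧ (i : ℕ) < (j : ℕ)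
        · rw [if_pos hc]
        · rw [if_neg hc, hlow' i j (by
            have : (i : ℕ) ≠ (j : ℕ) := fun h => hij (Fin.ext h)
            omega)]
    · rw [if_neg hi]
      by_cases hj : m ≤ (j : ℕ)
      · rw [if_pos hj]
        have hij : i ≠ j := by rintro rfl; omega
        simp only [hBdef, Matrix.of_apply, if_neg hij, if_pos (⟨by omega, hj⟩ :
          (i : ℕ) < m ∧ m ≤ (j : ℕ))]
      · rw [if_neg hj]
        by_cases hij : i = j
        · subst hij; rw [hdiag]; simp [hCdef]
        · simp only [hCdef, Matrix.of_apply, if_neg hij]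
          by_cases hc : (i : ℕ) < (j : ℕ) ∧ (j : ℕ) < m
          · rw [if_pos hc]
          · rw [if_neg hc, hlow' i j (by
              have : (i : ℕ) ≠ (j : ℕ) := fun h => hij (Fin.ext h)
              omega)]
  refine ⟨⟨A, B, C⟩, ⟨hA, hB, hC, hprod⟩, ?_⟩
  rintro ⟨A', B', C'⟩ ⟨hA', hB', hC', hx'⟩
  obtain ⟨h1, h2, h3⟩ := my_uniq n m A' B' C' A B C hA' hB' hC' hA hB hC
    (hx'.symm.trans hprod)
  simp [Prod.ext_iff, h1, h2, h3]
end

section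
/- Let n ∈ ℕ and 1 < m < n. Every matrix x ∈ B(n,ℝ) also admits the decomposition x = h · x_m · x^{(m)} with h ∈ B(m) given by h = x_m · x(m) · x_m^{-1}, where x = x_m x(m) x^{(m)} is the decomposition from the previous statement; moreover h = x_m x(m) x_m^{-1} indeed lies in B(m). -/
open Matrix

/-- If `x = x_m ⬝ x(m) ⬝ x^{(m)}` is the triple decomposition of `x ∈ B(n,ℝ)`, then also
`x = h ⬝ x_m ⬝ x^{(m)}` where `h = x_m ⬝ x(m) ⬝ x_m⁻¹`, and `h` lies in `B(m)`. -/
theorem unitriangular_alternative_decomposition (n m : ℕ) (hm1 : 1 < m) (hmn : m < n)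
    (x xm xmid xsup : Matrix (Fin n) (Fin n) ℝ)
    (h1 : InBsub n m xm) (h2 : InBmid n m xmid) (h3 : InBsup n m xsup)
    (hx : x = xm * xmid * xsup) :
    x = (xm * xmid * xm⁻¹) * xm * xsup ∧ InBmid n m (xm * xmid * xm⁻¹) := by
  obtain ⟨hd1, hz1⟩ := h1
  obtain ⟨hd2, hz2⟩ := h2
  -- xm is upper triangular
  have htri : xm.BlockTriangular id := by
    intro i j hij
    exact hz1 i j (fun h => absurd (congrArg Fin.val h.symm) (Nat.ne_of_lt hij))
      (fun h => absurd h.2 (Nat.not_lt.mpr (le_of_lt hij)))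
  have hdet : IsUnit xm.det := by
    rw [Matrix.det_of_upperTriangular htri]
    simp [hd1]
  haveI : Invertible xm := xm.invertibleOfIsUnitDet hdet
  have hinvtri : xm⁻¹.BlockTriangular id := blockTriangular_inv_of_blockTriangular htri
  have hinv : xm⁻¹ * xm = 1 := Matrix.nonsing_inv_mul xm hdet
  -- key : (xm - 1) * (xmid - 1) = 0
  have key : (xm - 1) * (xmid - 1) = 0 := by
    ext i j
    rw [Matrix.mul_apply, Matrix.zero_apply]
    apply Finset.sum_eq_zero
    intro k _
    by_cases hik : i = k
    · subst hik
      simp [hd1 i]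
    · by_cases hmk : m ≤ (i : ℕ) ∧ (i : ℕ) < (k : ℕ)
      · have hkz : (xmid - 1) k j = 0 := by
          by_cases hkj : k = j
          · subst hkj; simp [hd2 k]
          · rw [Matrix.sub_apply, hz2 k j hkj (fun h => absurd h.1
              (Nat.not_lt.mpr (le_trans hmk.1 (le_of_lt hmk.2)))), Matrix.one_apply_ne hkj]
            ring
        rw [hkz, mul_zero]
      · rw [Matrix.sub_apply, hz1 i k hik hmk, Matrix.one_apply_ne hik]
        simp
  have hmul : xm * xmid = xmid + xm - 1 := by
    have : xm * xmid - (xmid + xm - 1) = (xm - 1) * (xmid - 1) := by noncomm_ring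
    rw [key] at this
    linear_combination (norm := noncomm_ring) this
  have hform : xm * xmid * xm⁻¹ = 1 + (xmid - 1) * xm⁻¹ := by
    rw [hmul]
    have : (xmid + xm - 1) * xm⁻¹ = (xmid - 1) * xm⁻¹ + xm * xm⁻¹ := by noncomm_ring
    rw [this, Matrix.mul_nonsing_inv xm hdet]
    noncomm_ring
  -- entries of N' = (xmid - 1) * xm⁻¹
  have hN : ∀ i j : Fin n, (m ≤ (i : ℕ) ∨ (j : ℕ) < m) → ((xmid - 1) * xm⁻¹) i j = 0 := by
    intro i j hij
    rw [Matrix.mul_apply]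
    apply Finset.sum_eq_zero
    intro k _
    by_cases hik : i = k
    · subst hik; simp [hd2 i]
    · by_cases hik2 : (i : ℕ) < m ∧ m ≤ (k : ℕ)
      · rcases hij with h | h
        · exact absurd hik2.1 (Nat.not_lt.mpr h)
        · have : (j : ℕ) < (k : ℕ) := lt_of_lt_of_le h hik2.2
          rw [hinvtri this, mul_zero]
      · rw [Matrix.sub_apply, hz2 i k hik hik2, Matrix.one_apply_ne hik]
        simp
  constructor
  · rw [hx, mul_assoc (xm * xmid) xm⁻¹ xm, hinv, mul_one]
  · rw [hform]
    constructor
    · intro i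
      rw [Matrix.add_apply, Matrix.one_apply_eq, hN i i (le_or_gt m (i:ℕ))]
      ring
    · intro i j hij hcond
      rw [Matrix.add_apply, Matrix.one_apply_ne hij, hN i j ?_]
      · ring
      · rcases Nat.lt_or_ge (i : ℕ) m with h | h
        · right
          by_contra hjm
          exact hcond ⟨h, Nat.le_of_not_lt hjm⟩
        · left; exact h
end

section
/- If C = L·D·U is a Gauss decomposition of C ∈ Mat(n,ℂ) with all leading principal minors nonzero, then the entries of U and L are given by u_{km} = M^{1..k−1,k}_{1..k−1,m}(C) / M^{1..k}_{1..k}(C) and l_{mk} = M^{1..k−1,m}_{1..k−1,k}(C) / M^{1..k}_{1..k}(C) for 1 ≤ k < m ≤ n. -/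
open Matrix

def leadingMinor {n : ℕ} (C : Matrix (Fin n) (Fin n) ℂ) (k : ℕ) (hk : k ≤ n) : ℂ :=
  (C.submatrix (fun i : Fin k => Fin.castLE hk i) (fun j : Fin k => Fin.castLE hk j)).det

/-- The minor `M^{1..k}_{1..k−1,m}(C)` built from the first `k` rows (0-based: rows `0..k`)
and from the first `k−1` columns together with column `m` (0-based: columns `0..k-1` and `m`). -/
def minorRowsLeadColSwap {n : ℕ} (C : Matrix (Fin n) (Fin n) ℂ) (k m : Fin n) : ℂ :=
  (C.submatrix
    (fun i : Fin ((k : ℕ) + 1) => (⟨(i : ℕ), i.isLt.trans_le k.isLt⟩ : Fin n))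
    (fun j : Fin ((k : ℕ) + 1) =>
      if (j : ℕ) = (k : ℕ) then m else (⟨(j : ℕ), j.isLt.trans_le k.isLt⟩ : Fin n))).det

/-- The minor `M^{1..k−1,m}_{1..k}(C)` built from the first `k−1` rows together with row `m`
(0-based: rows `0..k-1` and `m`) and from the first `k` columns (0-based: columns `0..k`). -/
def minorColsLeadRowSwap {n : ℕ} (C : Matrix (Fin n) (Fin n) ℂ) (k m : Fin n) : ℂ :=
  (C.submatrix
    (fun i : Fin ((k : ℕ) + 1) =>
      if (i : ℕ) = (k : ℕ) then m else (⟨(i : ℕ), i.isLt.trans_le k.isLt⟩ : Fin n))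
    (fun j : Fin ((k : ℕ) + 1) => (⟨(j : ℕ), j.isLt.trans_le k.isLt⟩ : Fin n))).det

def LowerUnitriangular {n : ℕ} (L : Matrix (Fin n) (Fin n) ℂ) : Prop :=
  (∀ i, L i i = 1) ∧ ∀ i j : Fin n, i < j → L i j = 0

def UpperUnitriangular {n : ℕ} (U : Matrix (Fin n) (Fin n) ℂ) : Prop :=
  (∀ i, U i i = 1) ∧ ∀ i j : Fin n, j < i → U i j = 0

lemma sum_restrict {n N : ℕ} (h : N ≤ n) (g : Fin n → ℂ)
    (hg : ∀ p : Fin n, N ≤ (p : ℕ) → g p = 0) :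
    ∑ p, g p = ∑ q : Fin N, g (Fin.castLE h q) := by
  have : ∑ q : Fin N, g (Fin.castLE h q)
      = ∑ p ∈ Finset.univ.map (Fin.castLEEmb h), g p := by
    rw [Finset.sum_map]; rfl
  rw [this]
  symm
  apply Finset.sum_subset (Finset.subset_univ _)
  intro p _ hp
  apply hg
  by_contra hlt
  push_neg at hlt
  exact hp (Finset.mem_map.mpr ⟨⟨p, hlt⟩, Finset.mem_univ _, rfl⟩)


/-- In a Gauss decomposition `C = L·D·U` with all leading principal minors of `C` nonzero,
the entries of `U` and `L` are given by `u_{km} = M^{1..k}_{1..k−1,m}(C)/M^{1..k}_{1..k}(C)`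
and `l_{mk} = M^{1..k−1,m}_{1..k}(C)/M^{1..k}_{1..k}(C)` for `k < m`. -/
theorem gauss_decomposition_entries (n : ℕ) (C L U : Matrix (Fin n) (Fin n) ℂ)
    (d : Fin n → ℂ)
    (hL : LowerUnitriangular L) (hU : UpperUnitriangular U)
    (hC : C = L * Matrix.diagonal d * U)
    (hminors : ∀ (k : ℕ) (hk : k ≤ n), 1 ≤ k → leadingMinor C k hk ≠ 0) :
    ∀ k m : Fin n, k < m →
      U k m = minorRowsLeadColSwap C k m / leadingMinor C ((k : ℕ) + 1) k.isLt ∧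
      L m k = minorColsLeadRowSwap C k m / leadingMinor C ((k : ℕ) + 1) k.isLt := by
  intro k m hkm
  have hN : (k : ℕ) + 1 ≤ n := k.isLt
  set f : Fin ((k : ℕ) + 1) → Fin n := Fin.castLE hN with hf
  have hflast : f (Fin.last (k : ℕ)) = k := by
    apply Fin.ext; simp [hf]
  have hfcs : ∀ q : Fin (k : ℕ), ((f q.castSucc : Fin n) : ℕ) = (q : ℕ) := by
    intro q; simp [hf]
  -- entry formula, rows restricted
  have hCentry : ∀ (i : Fin ((k : ℕ) + 1)) (c : Fin n),
      C (f i) c = ∑ q : Fin ((k : ℕ) + 1), L (f i) (f q) * (d (f q) * U (f q) c) := by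
    intro i c
    rw [hC, Matrix.mul_apply]
    simp only [Matrix.mul_diagonal]
    rw [sum_restrict hN (fun p => L (f i) p * d p * U p c)]
    · exact Finset.sum_congr rfl (fun q _ => by ring)
    · intro p hp
      have : f i < p := by
        rw [Fin.lt_def]
        exact lt_of_lt_of_le (by simpa [hf] using i.isLt) hp
      rw [hL.2 _ _ this, zero_mul, zero_mul]
  -- entry formula, cols restricted
  have hCentry' : ∀ (r : Fin n) (j : Fin ((k : ℕ) + 1)),
      C r (f j) = ∑ q : Fin ((k : ℕ) + 1), (L r (f q) * d (f q)) * U (f q) (f j) := by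
    intro r j
    rw [hC, Matrix.mul_apply]
    simp only [Matrix.mul_diagonal]
    rw [sum_restrict hN (fun p => L r p * d p * U p (f j))]
    intro p hp
    have : f j < p := by
      rw [Fin.lt_def]
      exact lt_of_lt_of_le (by simpa [hf] using j.isLt) hp
    rw [hU.2 _ _ this, mul_zero]
  have key : ∀ (col : Fin ((k : ℕ) + 1) → Fin n),
      (C.submatrix f col).det
        = (L.submatrix f f).det *
          (Matrix.of fun q j => d (f q) * U (f q) (col j)).det := by
    intro col
    rw [← Matrix.det_mul]
    congr 1
    ext i j
    rw [Matrix.mul_apply]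
    simp only [Matrix.submatrix_apply, Matrix.of_apply]
    exact hCentry i (col j)
  have key' : ∀ (row : Fin ((k : ℕ) + 1) → Fin n),
      (C.submatrix row f).det
        = (Matrix.of fun i q => L (row i) (f q) * d (f q)).det *
          (U.submatrix f f).det := by
    intro row
    rw [← Matrix.det_mul]
    congr 1
    ext i j
    rw [Matrix.mul_apply]
    simp only [Matrix.submatrix_apply, Matrix.of_apply]
    exact hCentry' (row i) j
  have hmono : ∀ i j : Fin ((k : ℕ) + 1), i < j → f i < f j := by
    intro i j hij
    rwa [Fin.lt_def, hf, Fin.coe_castLE, Fin.coe_castLE, ← Fin.lt_def]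
  have detL : (L.submatrix f f).det = 1 := by
    rw [Matrix.det_of_lowerTriangular _ (by
      intro i j hij
      exact hL.2 _ _ (hmono _ _ (by simpa using hij)))]
    simp [hL.1]
  have detU : (U.submatrix f f).det = 1 := by
    rw [Matrix.det_of_upperTriangular (by
      intro i j hij
      exact hU.2 _ _ (hmono _ _ (by simpa using hij)))]
    simp [hU.1]
  -- leading minor
  have hlead : leadingMinor C ((k : ℕ) + 1) k.isLt = ∏ q : Fin ((k : ℕ) + 1), d (f q) := by
    show (C.submatrix f f).det = _
    rw [key f, detL, one_mul, Matrix.det_of_upperTriangular (by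
      intro i j hij
      simp only [Matrix.of_apply]
      rw [hU.2 _ _ (hmono _ _ (by simpa using hij)), mul_zero])]
    simp [hU.1]
  have hne : leadingMinor C ((k : ℕ) + 1) k.isLt ≠ 0 :=
    hminors ((k : ℕ) + 1) k.isLt (by omega)
  -- U side
  set col : Fin ((k : ℕ) + 1) → Fin n :=
    fun j => if (j : ℕ) = (k : ℕ) then m else f j with hcol
  have hcollast : col (Fin.last (k : ℕ)) = m := by simp [hcol]
  have hcolcs : ∀ q : Fin (k : ℕ), col q.castSucc = f q.castSucc := by
    intro q
    simp only [hcol, Fin.coe_castSucc]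
    rw [if_neg (Nat.ne_of_lt q.isLt)]
  have hUval : minorRowsLeadColSwap C k m
      = leadingMinor C ((k : ℕ) + 1) k.isLt * U k m := by
    have h1 : minorRowsLeadColSwap C k m = (C.submatrix f col).det := rfl
    rw [h1, key col, detL, one_mul, Matrix.det_of_upperTriangular (by
      intro i j hij
      simp only [Matrix.of_apply]
      have hjk : ((j : Fin ((k:ℕ)+1)) : ℕ) < (k : ℕ) :=
        lt_of_lt_of_le hij (Nat.lt_succ_iff.mp i.isLt)
      rw [hcol]
      simp only [if_neg (Nat.ne_of_lt hjk)]
      rw [hU.2 _ _ (hmono j i hij), mul_zero]), hlead]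
    rw [Fin.prod_univ_castSucc, Fin.prod_univ_castSucc]
    simp only [Matrix.of_apply, hcolcs, hcollast, hflast, hU.1, mul_one]
    ring
  -- L side
  set row : Fin ((k : ℕ) + 1) → Fin n :=
    fun i => if (i : ℕ) = (k : ℕ) then m else f i with hrow
  have hrowlast : row (Fin.last (k : ℕ)) = m := by simp [hrow]
  have hrowcs : ∀ q : Fin (k : ℕ), row q.castSucc = f q.castSucc := by
    intro q
    simp only [hrow, Fin.coe_castSucc]
    rw [if_neg (Nat.ne_of_lt q.isLt)]
  have hLval : minorColsLeadRowSwap C k m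
      = leadingMinor C ((k : ℕ) + 1) k.isLt * L m k := by
    have h1 : minorColsLeadRowSwap C k m = (C.submatrix row f).det := rfl
    rw [h1, key' row, detU, mul_one, Matrix.det_of_lowerTriangular _ (by
      intro i j hij
      have hij' : i < j := by simpa using hij
      simp only [Matrix.of_apply]
      have hik : ((i : Fin ((k:ℕ)+1)) : ℕ) < (k : ℕ) :=
        lt_of_lt_of_le hij' (Nat.lt_succ_iff.mp j.isLt)
      rw [hrow]
      simp only [if_neg (Nat.ne_of_lt hik)]
      rw [hL.2 _ _ (hmono i j hij'), zero_mul]), hlead]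
    rw [Fin.prod_univ_castSucc, Fin.prod_univ_castSucc]
    simp only [Matrix.of_apply, hrowcs, hrowlast, hflast, hL.1, one_mul]
    ring
  constructor
  · rw [hUval, mul_div_cancel_left₀ _ hne]
  · rw [hLval, mul_div_cancel_left₀ _ hne]
end

section
/- Let a = (a_{kn})_{(k,n)∈ℤ², k<n} be positive weights. The weighted ℓ² space 𝔟₂(a) = {x = Σ_{k<n} x_{kn}E_{kn} : Σ_{k<n} |x_{kn}|² a_{kn} < ∞} of strictly upper triangular ℤ×ℤ matrices is closed under matrix multiplication with the bound ‖xy‖ ≤ C‖x‖‖y‖ (i.e., is a Banach algebra) if the weights satisfy a_{kn} ≤ C·a_{km}·a_{mn} for all k < m < n in ℤ. -/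
/-- If the positive weights satisfy `a_{kn} ≤ C·a_{km}·a_{mn}` for `k < m < n`, then the
weighted ℓ² space of strictly upper triangular ℤ×ℤ matrices is closed under matrix
multiplication, with a bound `‖xy‖ ≤ K·‖x‖·‖y‖` (i.e., it is a Banach algebra). -/
theorem weighted_l2_upper_triangular_banach_algebra
    (a : ℤ → ℤ → ℝ) (C : ℝ) (hCpos : 0 < C)
    (ha_pos : ∀ k n : ℤ, k < n → 0 < a k n)
    (ha : ∀ k m n : ℤ, k < m → m < n → a k n ≤ C * a k m * a m n) :
    ∃ K : ℝ, 0 < K ∧ ∀ x y : ℤ → ℤ → ℝ,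
      (∀ k n : ℤ, ¬k < n → x k n = 0) → (∀ k n : ℤ, ¬k < n → y k n = 0) →
      Summable (fun p : ℤ × ℤ => x p.1 p.2 ^ 2 * a p.1 p.2) →
      Summable (fun p : ℤ × ℤ => y p.1 p.2 ^ 2 * a p.1 p.2) →
      (∀ k n : ℤ, Summable (fun m : ℤ => x k m * y m n)) ∧
      (∀ k n : ℤ, ¬k < n → (∑' m : ℤ, x k m * y m n) = 0) ∧
      Summable (fun p : ℤ × ℤ => (∑' m : ℤ, x p.1 m * y m p.2) ^ 2 * a p.1 p.2) ∧
      Real.sqrt (∑' p : ℤ × ℤ, (∑' m : ℤ, x p.1 m * y m p.2) ^ 2 * a p.1 p.2) ≤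
        K * Real.sqrt (∑' p : ℤ × ℤ, x p.1 p.2 ^ 2 * a p.1 p.2) *
          Real.sqrt (∑' p : ℤ × ℤ, y p.1 p.2 ^ 2 * a p.1 p.2) := by
  refine ⟨Real.sqrt C, Real.sqrt_pos.mpr hCpos, fun x y hx0 hy0 hx hy => ?_⟩
  -- the product entry is a finite sum
  have hsupp : ∀ k n : ℤ, ∀ m ∉ Finset.Ioo k n, x k m * y m n = 0 := by
    intro k n m hm
    rw [Finset.mem_Ioo] at hm
    rcases not_and_or.mp hm with h | h
    · rw [hx0 k m h, zero_mul]
    · rw [hy0 m n h, mul_zero]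
  have hsum : ∀ k n : ℤ, Summable (fun m : ℤ => x k m * y m n) := fun k n =>
    summable_of_ne_finset_zero (hsupp k n)
  have htsum : ∀ k n : ℤ, (∑' m : ℤ, x k m * y m n) = ∑ m ∈ Finset.Ioo k n, x k m * y m n :=
    fun k n => tsum_eq_sum (hsupp k n)
  have hzero : ∀ k n : ℤ, ¬k < n → (∑' m : ℤ, x k m * y m n) = 0 := by
    intro k n hkn
    rw [htsum]
    refine Finset.sum_eq_zero fun m hm => ?_
    rw [Finset.mem_Ioo] at hm
    exact absurd (hm.1.trans hm.2) hkn
  -- marginals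
  have hxnn : ∀ p : ℤ × ℤ, 0 ≤ x p.1 p.2 ^ 2 * a p.1 p.2 := by
    intro p
    by_cases h : p.1 < p.2
    · exact mul_nonneg (sq_nonneg _) (ha_pos _ _ h).le
    · rw [hx0 _ _ h]; simp
  have hynn : ∀ p : ℤ × ℤ, 0 ≤ y p.1 p.2 ^ 2 * a p.1 p.2 := by
    intro p
    by_cases h : p.1 < p.2
    · exact mul_nonneg (sq_nonneg _) (ha_pos _ _ h).le
    · rw [hy0 _ _ h]; simp
  set X : ℤ → ℝ := fun k => ∑' m : ℤ, x k m ^ 2 * a k m with hXdef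
  set Y : ℤ → ℝ := fun n => ∑' m : ℤ, y m n ^ 2 * a m n with hYdef
  have hXf : ∀ k, Summable (fun m : ℤ => x k m ^ 2 * a k m) := fun k => hx.prod_factor k
  have hy' : Summable (fun p : ℤ × ℤ => y p.2 p.1 ^ 2 * a p.2 p.1) := hy.prod_symm
  have hYf : ∀ n, Summable (fun m : ℤ => y m n ^ 2 * a m n) := fun n => hy'.prod_factor n
  have hXsum : Summable X := hx.prod
  have hYsum : Summable Y := hy'.prod
  have hXnn : ∀ k, 0 ≤ X k := fun k => tsum_nonneg fun m => hxnn (k, m)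
  have hYnn : ∀ n, 0 ≤ Y n := fun n => tsum_nonneg fun m => hynn (m, n)
  -- key pointwise bound
  have key : ∀ k n : ℤ, (∑' m : ℤ, x k m * y m n) ^ 2 * a k n ≤ C * (X k * Y n) := by
    intro k n
    by_cases hkn : k < n
    · rw [htsum]
      have hCS := Finset.sum_mul_sq_le_sq_mul_sq (Finset.Ioo k n)
        (fun m => x k m * Real.sqrt (a k m)) (fun m => y m n / Real.sqrt (a k m))
      have heq : ∀ m ∈ Finset.Ioo k n,
          (x k m * Real.sqrt (a k m)) * (y m n / Real.sqrt (a k m)) = x k m * y m n := by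
        intro m hm
        rw [Finset.mem_Ioo] at hm
        have := (ha_pos k m hm.1)
        field_simp
      rw [Finset.sum_congr rfl heq] at hCS
      have h1 : (∑ m ∈ Finset.Ioo k n, (x k m * Real.sqrt (a k m)) ^ 2) ≤ X k := by
        have : ∀ m ∈ Finset.Ioo k n, (x k m * Real.sqrt (a k m)) ^ 2 = x k m ^ 2 * a k m := by
          intro m hm
          rw [Finset.mem_Ioo] at hm
          rw [mul_pow, Real.sq_sqrt (ha_pos k m hm.1).le]
        rw [Finset.sum_congr rfl this]
        exact Summable.sum_le_tsum _ (fun m _ => hxnn (k, m)) (hXf k)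
      have h2 : (∑ m ∈ Finset.Ioo k n, (y m n / Real.sqrt (a k m)) ^ 2) ≤ C / a k n * Y n := by
        have hterm : ∀ m ∈ Finset.Ioo k n,
            (y m n / Real.sqrt (a k m)) ^ 2 ≤ C / a k n * (y m n ^ 2 * a m n) := by
          intro m hm
          rw [Finset.mem_Ioo] at hm
          have hakm := ha_pos k m hm.1
          have hamn := ha_pos m n hm.2
          have hakn := ha_pos k n hkn
          rw [div_pow, Real.sq_sqrt hakm.le]
          rw [div_le_iff₀ hakm]
          have h3 : a k n ≤ C * a k m * a m n := ha k m n hm.1 hm.2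
          have : C / a k n * (y m n ^ 2 * a m n) * a k m
              = y m n ^ 2 * ((C * a k m * a m n) / a k n) := by ring
          rw [this]
          have h4 : (1 : ℝ) ≤ (C * a k m * a m n) / a k n :=
            (one_le_div hakn).mpr h3
          nlinarith [sq_nonneg (y m n)]
        calc (∑ m ∈ Finset.Ioo k n, (y m n / Real.sqrt (a k m)) ^ 2)
            ≤ ∑ m ∈ Finset.Ioo k n, C / a k n * (y m n ^ 2 * a m n) :=
              Finset.sum_le_sum hterm
          _ = C / a k n * ∑ m ∈ Finset.Ioo k n, y m n ^ 2 * a m n := by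
              rw [Finset.mul_sum]
          _ ≤ C / a k n * Y n := by
              refine mul_le_mul_of_nonneg_left ?_ (div_nonneg hCpos.le (ha_pos k n hkn).le)
              exact Summable.sum_le_tsum _ (fun m _ => hynn (m, n)) (hYf n)
      have hakn := ha_pos k n hkn
      calc (∑ m ∈ Finset.Ioo k n, x k m * y m n) ^ 2 * a k n
          ≤ (∑ m ∈ Finset.Ioo k n, (x k m * Real.sqrt (a k m)) ^ 2)
            * (∑ m ∈ Finset.Ioo k n, (y m n / Real.sqrt (a k m)) ^ 2) * a k n :=
            mul_le_mul_of_nonneg_right hCS hakn.le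
        _ ≤ X k * (C / a k n * Y n) * a k n := by
            refine mul_le_mul_of_nonneg_right ?_ hakn.le
            refine mul_le_mul h1 h2 ?_ (hXnn k)
            exact Finset.sum_nonneg fun m _ => sq_nonneg _
        _ = C * (X k * Y n) := by field_simp
    · rw [hzero k n hkn]
      have : (0:ℝ) ^ 2 * a k n = 0 := by ring
      rw [this]
      exact mul_nonneg hCpos.le (mul_nonneg (hXnn k) (hYnn n))
  have hznn : ∀ p : ℤ × ℤ, 0 ≤ (∑' m : ℤ, x p.1 m * y m p.2) ^ 2 * a p.1 p.2 := by
    intro p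
    by_cases h : p.1 < p.2
    · exact mul_nonneg (sq_nonneg _) (ha_pos _ _ h).le
    · rw [hzero _ _ h]; simp
  -- summability of the majorant
  have hmaj : Summable (fun p : ℤ × ℤ => C * (X p.1 * Y p.2)) :=
    (hXsum.mul_of_nonneg hYsum hXnn hYnn).mul_left C
  have hzsum : Summable (fun p : ℤ × ℤ => (∑' m : ℤ, x p.1 m * y m p.2) ^ 2 * a p.1 p.2) :=
    Summable.of_nonneg_of_le hznn (fun p => key p.1 p.2) hmaj
  refine ⟨hsum, hzero, hzsum, ?_⟩
  -- tsum bound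
  have hXeq : ∑' k, X k = ∑' p : ℤ × ℤ, x p.1 p.2 ^ 2 * a p.1 p.2 :=
    (Summable.tsum_prod' hx hXf).symm
  have hYeq : ∑' n, Y n = ∑' p : ℤ × ℤ, y p.1 p.2 ^ 2 * a p.1 p.2 := by
    rw [← (Equiv.prodComm ℤ ℤ).tsum_eq (fun p : ℤ × ℤ => y p.1 p.2 ^ 2 * a p.1 p.2)]
    exact (Summable.tsum_prod' hy' hYf).symm
  have hmajeq : ∑' p : ℤ × ℤ, C * (X p.1 * Y p.2) = C * ((∑' k, X k) * (∑' n, Y n)) := by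
    rw [tsum_mul_left]
    congr 1
    rw [Summable.tsum_prod' (hXsum.mul_of_nonneg hYsum hXnn hYnn)
      (fun k => (hYsum.mul_left (X k)).congr (fun n => rfl))]
    simp_rw [tsum_mul_left]
    rw [tsum_mul_right]
  have hle : (∑' p : ℤ × ℤ, (∑' m : ℤ, x p.1 m * y m p.2) ^ 2 * a p.1 p.2)
      ≤ C * ((∑' k, X k) * (∑' n, Y n)) := by
    rw [← hmajeq]
    exact Summable.tsum_le_tsum (fun p => key p.1 p.2) hzsum hmaj
  calc Real.sqrt (∑' p : ℤ × ℤ, (∑' m : ℤ, x p.1 m * y m p.2) ^ 2 * a p.1 p.2)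
      ≤ Real.sqrt (C * ((∑' k, X k) * (∑' n, Y n))) := Real.sqrt_le_sqrt hle
    _ = Real.sqrt C * Real.sqrt (∑' k, X k) * Real.sqrt (∑' n, Y n) := by
        rw [Real.sqrt_mul hCpos.le, Real.sqrt_mul (tsum_nonneg hXnn), mul_assoc]
    _ = Real.sqrt C * Real.sqrt (∑' p : ℤ × ℤ, x p.1 p.2 ^ 2 * a p.1 p.2) *
          Real.sqrt (∑' p : ℤ × ℤ, y p.1 p.2 ^ 2 * a p.1 p.2) := by rw [hXeq, hYeq]
end

section
/- Let μ_b = ⊗_{(k,n)} μ_{b_{kn}} be an infinite product of centered one-dimensional Gaussian measures μ_{b_{kn}} with densities √(b_{kn}/π)·exp(−b_{kn}x²) on coordinates indexed by pairs (k,n) with k<n, and let a = (a_{kn}) be positive weights. Then μ_b assigns full measure to the weighted ℓ² ball {x : Σ_{(k,n)} a_{kn} x_{kn}² < ∞} if and only if Σ_{(k,n)} a_{kn}/b_{kn} < ∞. -/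
open MeasureTheory ProbabilityTheory Real Finset
open scoped ENNReal NNReal

/-!
Write `Y i = a i * x i ^ 2`. Then `𝔼 Y i = a i / (2 b i)` and
`𝔼 exp (-Y i) = (1 + a i / b i)^(-1/2)`.
If `∑ a i / b i < ∞`, the series `∑ Y i` has finite expectation, hence converges almost surely.
Conversely, if it converges almost surely then `c = 𝔼 exp (-∑ Y i) > 0`, and by independence
`c ≤ ∏_{i ∈ s} (1 + a i / b i)^(-1/2) ≤ (1 + ∑_{i ∈ s} a i / b i)^(-1/2)` for every finite `s`,
which bounds the partial sums of `∑ a i / b i`.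
-/

lemma one_add_sum_le_prod_one_add {ι : Type*} (s : Finset ι) {r : ι → ℝ} (hr : ∀ i, 0 ≤ r i) :
    1 + ∑ i ∈ s, r i ≤ ∏ i ∈ s, (1 + r i) := by
  classical
  induction s using Finset.induction_on with
  | empty => simp
  | insert i s hi ih =>
    rw [sum_insert hi, prod_insert hi]
    nlinarith [hr i, sum_nonneg fun j (_ : j ∈ s) => hr j]

lemma summable_of_le_prod_inv_sqrt_one_add {ι : Type*} {r : ι → ℝ} (hr : ∀ i, 0 ≤ r i)
    {c : ℝ} (hc : 0 < c) (h : ∀ s : Finset ι, c ≤ ∏ i ∈ s, (√(1 + r i))⁻¹) : Summable r := by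
  refine summable_of_sum_le (c := (c ^ 2)⁻¹) hr fun s => ?_
  have hsum : 0 ≤ ∑ i ∈ s, r i := sum_nonneg fun i _ => hr i
  have hprod : c ^ 2 ≤ (1 + ∑ i ∈ s, r i)⁻¹ :=
    calc c ^ 2 ≤ (∏ i ∈ s, (√(1 + r i))⁻¹) ^ 2 := pow_le_pow_left₀ hc.le (h s) 2
      _ = (∏ i ∈ s, (1 + r i))⁻¹ := by
        rw [← prod_pow, ← prod_inv_distrib]
        exact prod_congr rfl fun i _ => by rw [inv_pow, sq_sqrt (by linarith [hr i])]
      _ ≤ (1 + ∑ i ∈ s, r i)⁻¹ := inv_anti₀ (by positivity) (one_add_sum_le_prod_one_add s hr)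
  have := (le_inv_comm₀ (by positivity) (by positivity)).1 hprod
  linarith

lemma measurableSet_setOf_summable {α ι E : Type*} [MeasurableSpace α] [Countable ι]
    [AddCommMonoid E] [TopologicalSpace E] [TopologicalSpace.IsCompletelyPseudoMetrizableSpace E]
    [SecondCountableTopology E] [MeasurableSpace E] [BorelSpace E] [MeasurableAdd₂ E]
    {f : ι → α → E} (hf : ∀ i, Measurable (f i)) : MeasurableSet {x | Summable fun i => f i x} :=
  measurableSet_exists_tendsto (l := Filter.atTop) fun s : Finset ι =>
    Finset.measurable_sum s fun i _ => hf i

section Moments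

variable {Ω : Type*} [MeasurableSpace Ω] {μ : Measure Ω}

lemma integrable_exp_mul_of_nonpos_of_nonneg [IsFiniteMeasure μ] {X : Ω → ℝ} {t : ℝ}
    (ht : t ≤ 0) (hX : AEMeasurable X μ) (h0 : ∀ᵐ ω ∂μ, 0 ≤ X ω) :
    Integrable (fun ω => exp (t * X ω)) μ := by
  refine .of_mem_Icc 0 1 (hX.const_mul t).exp ?_
  filter_upwards [h0] with ω hω
  exact ⟨(exp_pos _).le, exp_le_one_iff.2 (mul_nonpos_of_nonpos_of_nonneg ht hω)⟩

lemma exists_pos_le_prod_mgf_of_ae_summable {ι : Type*} [Countable ι] {Y : ι → Ω → ℝ}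
    (hindep : iIndepFun Y μ) (hmeas : ∀ i, Measurable (Y i)) (h0 : ∀ i ω, 0 ≤ Y i ω)
    (hsum : ∀ᵐ ω ∂μ, Summable fun i => Y i ω) {t : ℝ} (ht : t ≤ 0) :
    ∃ c > 0, ∀ s : Finset ι, c ≤ ∏ i ∈ s, mgf (Y i) μ t := by
  have := hindep.isProbabilityMeasure
  have hS : Measurable fun ω => ∑' i, Y i ω := Measurable.tsum hmeas
  refine ⟨mgf (fun ω => ∑' i, Y i ω) μ t, mgf_pos ?_, fun s => ?_⟩
  · exact integrable_exp_mul_of_nonpos_of_nonneg ht hS.aemeasurable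
      (ae_of_all _ fun ω => tsum_nonneg fun i => h0 i ω)
  rw [← hindep.mgf_sum hmeas]
  refine mgf_anti_of_nonpos ?_ ht ?_
  · filter_upwards [hsum] with ω hω
    simpa using hω.sum_le_tsum s fun i _ => h0 i ω
  · exact integrable_exp_mul_of_nonpos_of_nonneg ht (by fun_prop)
      (ae_of_all _ fun ω => by simpa using sum_nonneg fun i (_ : i ∈ s) => h0 i ω)

end Moments

lemma mgf_sq_gaussianReal (v : ℝ≥0) {t : ℝ} (ht : 2 * v * t < 1) :
    mgf (fun y => y ^ 2) (gaussianReal 0 v) t = (√(1 - 2 * v * t))⁻¹ := by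
  rcases eq_or_ne v 0 with rfl | hv
  · simp [mgf, gaussianReal_zero_var]
  have hd : 0 < 1 - 2 * v * t := by linarith
  have hpdf : ∀ y, gaussianPDFReal 0 v y • exp (t * y ^ 2)
      = (√(2 * π * v))⁻¹ * exp (-((1 - 2 * v * t) / (2 * v)) * y ^ 2) := fun y => by
    rw [gaussianPDFReal, smul_eq_mul, mul_assoc, ← exp_add]
    congr 2
    field_simp
    ring
  rw [mgf, integral_gaussianReal_eq_integral_smul hv]
  simp_rw [hpdf]
  rw [integral_const_mul, integral_gaussian, div_div_eq_mul_div, sqrt_div' _ hd.le,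
    show π * (2 * (v : ℝ)) = 2 * π * v by ring]
  field_simp

lemma lintegral_sq_gaussianReal (v : ℝ≥0) : ∫⁻ y, ENNReal.ofReal (y ^ 2) ∂gaussianReal 0 v = v := by
  have hint : Integrable (fun y : ℝ => y ^ 2) (gaussianReal 0 v) :=
    (memLp_id_gaussianReal 2).integrable_sq
  rw [← ofReal_integral_eq_lintegral_ofReal hint (ae_of_all _ fun y => sq_nonneg y),
    ← variance_of_integral_eq_zero aemeasurable_id' integral_id_gaussianReal,
    variance_fun_id_gaussianReal, ENNReal.ofReal_coe_nnreal]

section GaussianLaw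

variable {Ω : Type*} [MeasurableSpace Ω] {μ : Measure Ω} {X : Ω → ℝ} {v : ℝ≥0}

lemma mgf_sq_of_map_eq_gaussianReal (hX : AEMeasurable X μ) (hlaw : μ.map X = gaussianReal 0 v)
    {t : ℝ} (ht : 2 * v * t < 1) : mgf (fun ω => X ω ^ 2) μ t = (√(1 - 2 * v * t))⁻¹ := by
  rw [show (fun ω => X ω ^ 2) = (fun y => y ^ 2) ∘ X from rfl, ← mgf_map hX (by fun_prop), hlaw,
    mgf_sq_gaussianReal v ht]

lemma lintegral_sq_of_map_eq_gaussianReal (hX : Measurable X) (hlaw : μ.map X = gaussianReal 0 v) :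
    ∫⁻ ω, ENNReal.ofReal (X ω ^ 2) ∂μ = v := by
  rw [← lintegral_map (f := fun y => ENNReal.ofReal (y ^ 2)) (by fun_prop) hX, hlaw,
    lintegral_sq_gaussianReal]

variable {a b : ℝ}

lemma mgf_const_mul_sq_of_map_eq_gaussianReal (hX : AEMeasurable X μ) (ha : 0 ≤ a) (hb : 0 < b)
    (hlaw : μ.map X = gaussianReal 0 (1 / (2 * b)).toNNReal) :
    mgf (fun ω => a * X ω ^ 2) μ (-1) = (√(1 + a / b))⁻¹ := by
  have hvar : 2 * ((1 / (2 * b)).toNNReal : ℝ) * (a * -1) = -(a / b) := by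
    rw [Real.coe_toNNReal _ (by positivity)]
    field_simp
  have ht : 2 * ((1 / (2 * b)).toNNReal : ℝ) * (a * -1) < 1 := by
    rw [hvar]
    linarith [div_nonneg ha hb.le]
  rw [mgf_const_mul, mgf_sq_of_map_eq_gaussianReal hX hlaw ht, hvar, sub_neg_eq_add]

lemma eLpNorm_const_mul_sq_of_map_eq_gaussianReal (hX : Measurable X) (ha : 0 ≤ a) (hb : 0 < b)
    (hlaw : μ.map X = gaussianReal 0 (1 / (2 * b)).toNNReal) :
    eLpNorm (fun ω => a * X ω ^ 2) 1 μ = ENNReal.ofReal (a / b / 2) := by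
  have hnorm : ∀ ω, ‖a * X ω ^ 2‖ₑ = ENNReal.ofReal a * ENNReal.ofReal (X ω ^ 2) := fun ω => by
    rw [Real.enorm_of_nonneg (by positivity), ENNReal.ofReal_mul ha]
  rw [eLpNorm_one_eq_lintegral_enorm, lintegral_congr hnorm, lintegral_const_mul _ (by fun_prop),
    lintegral_sq_of_map_eq_gaussianReal hX hlaw, ← ENNReal.ofReal_coe_nnreal,
    Real.coe_toNNReal _ (by positivity), ← ENNReal.ofReal_mul ha]
  congr 1
  field_simp

end GaussianLaw

/-- Kolmogorov zero–one law for Gaussian weighted ℓ² balls: for independent centered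
Gaussian coordinates `x_{kn}` with densities `√(b_{kn}/π)·e^{−b_{kn}x²}` (i.e., variance
`1/(2b_{kn})`), indexed by pairs `(k,n)` with `k < n`, the weighted ℓ² ball
`{x : Σ a_{kn} x_{kn}² < ∞}` has full measure if and only if `Σ a_{kn}/b_{kn} < ∞`. -/
theorem gaussian_weighted_l2_full_measure_iff
    {Ω : Type*} [MeasurableSpace Ω] (μ : Measure Ω) [IsProbabilityMeasure μ]
    (a b : {p : ℤ × ℤ // p.1 < p.2} → ℝ)
    (ha : ∀ i, 0 < a i) (hb : ∀ i, 0 < b i)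
    (x : {p : ℤ × ℤ // p.1 < p.2} → Ω → ℝ)
    (hmeas : ∀ i, Measurable (x i))
    (hindep : iIndepFun x μ)
    (hgauss : ∀ i, Measure.map (x i) μ = gaussianReal 0 (Real.toNNReal (1 / (2 * b i)))) :
    μ {ω | Summable (fun i => a i * (x i ω) ^ 2)} = 1 ↔ Summable (fun i => a i / b i) := by
  have hYmeas : ∀ i, Measurable fun ω => a i * x i ω ^ 2 := fun i => by fun_prop
  rw [← prob_compl_eq_zero_iff (measurableSet_setOf_summable hYmeas), ← mem_ae_iff]
  constructor
  · intro hsum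
    obtain ⟨c, hc, hle⟩ := exists_pos_le_prod_mgf_of_ae_summable
      (hindep.comp (fun i y => a i * y ^ 2) fun i => by fun_prop) hYmeas
      (fun i ω => mul_nonneg (ha i).le (sq_nonneg _)) hsum (by norm_num : (-1 : ℝ) ≤ 0)
    refine summable_of_le_prod_inv_sqrt_one_add (fun i => (div_pos (ha i) (hb i)).le) hc
      fun s => (hle s).trans_eq (prod_congr rfl fun i _ => ?_)
    exact mgf_const_mul_sq_of_map_eq_gaussianReal (hmeas i).aemeasurable (ha i).le (hb i) (hgauss i)
  · intro hsum
    refine (summable_norm_of_tsum_eLpNorm_ne_top le_rfl (fun i => (hYmeas i).aestronglyMeasurable)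
      ?_).mono fun ω hω => hω.of_norm
    simp_rw [eLpNorm_const_mul_sq_of_map_eq_gaussianReal (hmeas _) (ha _).le (hb _) (hgauss _)]
    rw [← ENNReal.ofReal_tsum_of_nonneg (fun i => by have := ha i; have := hb i; positivity)
      (hsum.div_const 2)]
    exact ENNReal.ofReal_ne_top
end
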